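/- arXiv:1102.4421 — 4 statements merged into one kernel-verified Lean document; each statement's English description precedes it below -/
import Mathlib

section
/- Let Δ be a finite connected graph and G ≤ Aut(Δ). Let (x,y) be an arc of Δ. Suppose N ≤ G_x acts transitively on Δ(x) and M ≤ G_y acts transitively on Δ(y). If H ≤ G_{x,y} (the stabiliser of both x and y) and H is normal in ⟨N, M⟩, then H = 1. -/
open Equiv Subgroup

/-- `N` (a subgroup of `Perm V`) acts transitively on the neighbourhood of `x`. -/
def transOn {V : Type*} (Δ : SimpleGraph V) (N : Subgroup (Equiv.Perm V)) (x : V) : Prop :=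
  ∀ u ∈ Δ.neighborSet x, ∀ v ∈ Δ.neighborSet x, ∃ g ∈ N, g u = v

/-- The permutation group induced by `N` on the neighbourhood of `x` is semiregular. -/
def semiregOn {V : Type*} (Δ : SimpleGraph V) (N : Subgroup (Equiv.Perm V)) (x : V) : Prop :=
  ∀ g ∈ N, (∃ u ∈ Δ.neighborSet x, g u = u) → ∀ v ∈ Δ.neighborSet x, g v = v

/-- The stabiliser `G_x`. -/
def vstab {V : Type*} (G : Subgroup (Equiv.Perm V)) (x : V) : Subgroup (Equiv.Perm V) :=
  G ⊓ MulAction.stabilizer (Equiv.Perm V) x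

/-- `G_x^{[i]}`: pointwise stabiliser of the ball of radius `i` around `x`. -/
def ball {V : Type*} (Δ : SimpleGraph V) (G : Subgroup (Equiv.Perm V)) (x : V) (i : ℕ) :
    Subgroup (Equiv.Perm V) :=
  G ⊓ ⨅ z ∈ {z : V | Δ.dist x z ≤ i}, MulAction.stabilizer (Equiv.Perm V) z

/-- `K` is a normal subgroup of `H` (both subgroups of `Perm V`). -/
def normalIn {V : Type*} (K H : Subgroup (Equiv.Perm V)) : Prop :=
  K ≤ H ∧ ∀ h ∈ H, ∀ k ∈ K, h * k * h⁻¹ ∈ K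

/-- `O_p(H)`: the largest normal `p`-subgroup of `H`. -/
def Op {V : Type*} (p : ℕ) (H : Subgroup (Equiv.Perm V)) : Subgroup (Equiv.Perm V) :=
  sSup {K | normalIn K H ∧ IsPGroup p K}

/-- `E_x = ⟨O_p(G_{x,z}) : z ∈ Δ(x)⟩`. -/
def Ep {V : Type*} (Δ : SimpleGraph V) (G : Subgroup (Equiv.Perm V)) (p : ℕ) (x : V) :
    Subgroup (Equiv.Perm V) :=
  ⨆ z ∈ Δ.neighborSet x, Op p (vstab G x ⊓ vstab G z)

/-- `C_{G_x}(G_x^{[1]})`. -/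
def locCent {V : Type*} (Δ : SimpleGraph V) (G : Subgroup (Equiv.Perm V)) (x : V) :
    Subgroup (Equiv.Perm V) :=
  vstab G x ⊓ Subgroup.centralizer ((ball Δ G x 1 : Subgroup (Equiv.Perm V)) : Set (Equiv.Perm V))

/-- Hypothesis (⋆). -/
def StarHyp {V : Type*} (Δ : SimpleGraph V) (G : Subgroup (Equiv.Perm V)) : Prop :=
  ∀ x : V,
    transOn Δ (vstab G x) x ∧
    (transOn Δ (locCent Δ G x) x ∨ semiregOn Δ (locCent Δ G x) x) ∧
    ∀ p : ℕ, p.Prime → (transOn Δ (Ep Δ G p x) x ∨ semiregOn Δ (Ep Δ G p x) x)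

/-- `G` is a group of automorphisms of `Δ`. -/
def isAut {V : Type*} (Δ : SimpleGraph V) (G : Subgroup (Equiv.Perm V)) : Prop :=
  ∀ g ∈ G, ∀ u v : V, Δ.Adj (g u) (g v) ↔ Δ.Adj u v

/-- `K` is a subnormal subgroup of `H`. -/
def subnormalIn {V : Type*} (K H : Subgroup (Equiv.Perm V)) : Prop :=
  ∃ (n : ℕ) (c : ℕ → Subgroup (Equiv.Perm V)),
    c 0 = K ∧ c n = H ∧ ∀ i < n, normalIn (c i) (c (i + 1))

/-- `K` is quasisimple: perfect and simple modulo its centre. -/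
def IsQuasisimple {V : Type*} (K : Subgroup (Equiv.Perm V)) : Prop :=
  commutator ↥K = ⊤ ∧ IsSimpleGroup (↥K ⧸ Subgroup.center ↥K)

/-- `E(H)`: the layer, generated by the components of `H`. -/
def layer {V : Type*} (H : Subgroup (Equiv.Perm V)) : Subgroup (Equiv.Perm V) :=
  sSup {K | subnormalIn K H ∧ IsQuasisimple K}

/-- `F(H)`: the Fitting subgroup of `H`. -/
def fitting {V : Type*} (H : Subgroup (Equiv.Perm V)) : Subgroup (Equiv.Perm V) :=
  sSup {K | normalIn K H ∧ Group.IsNilpotent ↥K}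

/-- `F*(H) = E(H)F(H)`: the generalised Fitting subgroup of `H`. -/
def genFitting {V : Type*} (H : Subgroup (Equiv.Perm V)) : Subgroup (Equiv.Perm V) :=
  layer H ⊔ fitting H

/-
Let `W = ⟨N, M⟩`. Transitivity of `N` on `Δ(x)` and of `M` on `Δ(y)` lets one walk along any path
of `Δ` inside the `W`-orbits of `x` and `y`, so by connectedness these two orbits cover every
vertex. A normal subgroup `H` of `W` fixing `x` and `y` then fixes every `g x` and `g y` with
`g ∈ W`, since `g⁻¹ H g = H`; hence it fixes every vertex and is trivial.
-/

section

variable {V : Type*} {Δ : SimpleGraph V}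

theorem SimpleGraph.Preconnected.mem_of_adj_closed (hΔ : Δ.Preconnected) {S : Set V}
    (hS : ∀ u v, Δ.Adj u v → u ∈ S → v ∈ S) {x : V} (hx : x ∈ S) (v : V) : v ∈ S := by
  obtain ⟨w⟩ := hΔ x v
  induction w with
  | nil => exact hx
  | cons huv _ ih => exact ih (hS _ _ huv hx)

theorem isAut.mono {G K : Subgroup (Perm V)} (hG : isAut Δ G) (hK : K ≤ G) : isAut Δ K :=
  fun g hg => hG g (hK hg)

theorem isAut.adj_apply_iff {G : Subgroup (Perm V)} (hG : isAut Δ G) {g : Perm V} (hg : g ∈ G)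
    (u v : V) : Δ.Adj (g u) v ↔ Δ.Adj u (g⁻¹ v) := by
  simpa using hG g hg u (g⁻¹ v)

theorem transOn.exists_mem_apply_eq {W N : Subgroup (Perm V)} {x y : V} (hN : transOn Δ N x)
    (hW : isAut Δ W) (hNW : N ≤ W) (hxy : Δ.Adj x y) {g : Perm V} (hg : g ∈ W) {v : V}
    (hv : Δ.Adj (g x) v) : ∃ g' ∈ W, g' y = v := by
  obtain ⟨n, hn, hny⟩ := hN y hxy (g⁻¹ v) ((hW.adj_apply_iff hg x v).mp hv)
  exact ⟨g * n, mul_mem hg (hNW hn), by simp [Perm.mul_apply, hny]⟩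

theorem exists_apply_eq_of_transOn (hconn : Δ.Preconnected) {W N M : Subgroup (Perm V)}
    (hW : isAut Δ W) (hNW : N ≤ W) (hMW : M ≤ W) {x y : V} (hxy : Δ.Adj x y)
    (hN : transOn Δ N x) (hM : transOn Δ M y) (v : V) : ∃ g ∈ W, g x = v ∨ g y = v := by
  refine hconn.mem_of_adj_closed (S := {v | ∃ g ∈ W, g x = v ∨ g y = v}) ?_
    ⟨1, one_mem W, Or.inl rfl⟩ v
  rintro u v huv ⟨g, hg, rfl | rfl⟩
  · obtain ⟨g', hg', hv⟩ := hN.exists_mem_apply_eq hW hNW hxy hg huv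
    exact ⟨g', hg', Or.inr hv⟩
  · obtain ⟨g', hg', hv⟩ := hM.exists_mem_apply_eq hW hMW hxy.symm hg huv
    exact ⟨g', hg', Or.inl hv⟩

theorem normalIn.apply_apply_eq {H W : Subgroup (Perm V)} (hHW : normalIn H W) {z : V}
    (hz : ∀ k ∈ H, k z = z) {g h : Perm V} (hg : g ∈ W) (hh : h ∈ H) : h (g z) = g z := by
  have hconj : g⁻¹ * h * g ∈ H := by simpa using hHW.2 g⁻¹ (inv_mem hg) h hh
  simpa [Perm.mul_apply] using congrArg g (hz _ hconj)

end

theorem stmt0_general {V : Type*} (Δ : SimpleGraph V) (G : Subgroup (Equiv.Perm V))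
    (hconn : Δ.Connected) (hG : isAut Δ G) {x y : V} (hxy : Δ.Adj x y)
    (N M H : Subgroup (Equiv.Perm V))
    (hNG : N ≤ vstab G x) (hN : transOn Δ N x)
    (hMG : M ≤ vstab G y) (hM : transOn Δ M y)
    (hH : H ≤ vstab G x ⊓ vstab G y) (hHn : normalIn H (N ⊔ M)) :
    H = ⊥ := by
  have hW : isAut Δ (N ⊔ M) := hG.mono (sup_le (hNG.trans inf_le_left) (hMG.trans inf_le_left))
  have hcover := exists_apply_eq_of_transOn hconn.preconnected hW le_sup_left le_sup_right hxy hN hM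
  refine (eq_bot_iff_forall H).mpr fun h hh => Perm.ext fun v => ?_
  obtain ⟨g, hg, rfl | rfl⟩ := hcover v
  · exact hHn.apply_apply_eq (fun k hk => (hH hk).1.2) hg hh
  · exact hHn.apply_apply_eq (fun k hk => (hH hk).2.2) hg hh

theorem stmt0 {V : Type*} [Fintype V] (Δ : SimpleGraph V) (G : Subgroup (Equiv.Perm V))
    (hconn : Δ.Connected) (hG : isAut Δ G) {x y : V} (hxy : Δ.Adj x y)
    (N M H : Subgroup (Equiv.Perm V))
    (hNG : N ≤ vstab G x) (hN : transOn Δ N x)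
    (hMG : M ≤ vstab G y) (hM : transOn Δ M y)
    (hH : H ≤ vstab G x ⊓ vstab G y) (hHn : normalIn H (N ⊔ M)) :
    H = ⊥ :=
  stmt0_general Δ G hconn hG hxy N M H hNG hN hMG hM hH hHn
end

section
/- Let Δ be a finite connected graph with G ≤ Aut(Δ) satisfying Hypothesis (⋆) at every vertex. Let (x,y) be an arc. If E(G_x^{[1]}) ≠ E(G_{x,y}), then G_{x,y}^{[1]} = G_x^{[2]} and G_y^{[2]} = 1. -/
open Equiv Subgroup

/-!
By Wielandt's lemma, a component of `G_{x,y}` not contained in its normal subgroup `G_x^{[1]}`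
centralises `G_x^{[1]}`; so `L_x = C_{G_x}(G_x^{[1]})` contains an element fixing `y` but moving
some neighbour of `x`, and by (⋆) `L_x` is transitive on `Δ(x)`. Elements of `L_x` commute with
`G_x^{[1]}`, so conjugating by them shows that `G_{x,y}^{[1]}` fixes every `Δ(w)`, `w ∈ Δ(x)`, and
that `G_w^{[2]}` does not depend on `w ∈ Δ(x)`. As `G_a` is transitive on `Δ(a)`, transitivity of
`L` spreads from `u` to every vertex at distance two from `u`, hence `G_y^{[2]}` fixes every vertex.
-/

theorem Subgroup.le_center_or_eq_top_of_isSimpleGroup_quotient_center {K : Type*} [Group K]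
    (hperf : _root_.commutator K = ⊤) [IsSimpleGroup (K ⧸ center K)] (N : Subgroup K)
    [N.Normal] : N ≤ center K ∨ N = ⊤ := by
  rcases ((‹N.Normal›.map _ (QuotientGroup.mk'_surjective (center K))).eq_bot_or_eq_top) with
      hbot | htop
  · left
    simpa [Subgroup.map_eq_bot_iff] using hbot
  · right
    have hsup : N ⊔ center K = ⊤ := by
      simpa [Subgroup.comap_map_eq] using congrArg (comap (QuotientGroup.mk' (center K))) htop
    -- `K / N` is the image of the centre, hence abelian
    have hab : Subgroup.map (QuotientGroup.mk' N) ⁅(⊤ : Subgroup K), ⊤⁆ = ⊥ := by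
      rw [← hsup, map_commutator, map_sup, (Subgroup.map_eq_bot_iff _).mpr (by simp), bot_sup_eq,
        ← map_commutator, commutator_center_left, Subgroup.map_bot]
    rw [← _root_.commutator_def, hperf, Subgroup.map_eq_bot_iff, QuotientGroup.ker_mk'] at hab
    exact eq_top_iff.mpr hab

section Subnormal

variable {V : Type*} {K M H N : Subgroup (Perm V)}

theorem normalIn.inf_of_le (hM : normalIn M H) (hN : N ≤ H) : normalIn (M ⊓ N) N :=
  ⟨inf_le_right, fun h hh k hk =>
    ⟨hM.2 h (hN hh) k hk.1, N.mul_mem (N.mul_mem hh hk.2) (N.inv_mem hh)⟩⟩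

theorem normalIn.commutator_le (hM : normalIn M H) (hK : K ≤ M) (hN : N ≤ H) : ⁅K, N⁆ ≤ M := by
  rw [Subgroup.commutator_le]
  intro k hk a ha
  rw [commutatorElement_def, mul_assoc, mul_assoc]
  exact M.mul_mem (hK hk) (by simpa [mul_assoc] using hM.2 a (hN ha) k⁻¹ (M.inv_mem (hK hk)))

theorem subnormalIn_refl (K : Subgroup (Perm V)) : subnormalIn K K :=
  ⟨0, fun _ => K, rfl, rfl, fun _ h => absurd h (Nat.not_lt_zero _)⟩

theorem subnormalIn.trans_normalIn (hK : subnormalIn K M) (hM : normalIn M H) :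
    subnormalIn K H := by
  obtain ⟨n, c, h0, hn, hc⟩ := hK
  refine ⟨n + 1, fun i => if i ≤ n then c i else H, by simpa using h0, by simp, fun i hi => ?_⟩
  rcases Nat.lt_or_ge i n with h | h
  · simpa [h.le, Nat.succ_le_of_lt h] using hc i h
  · obtain rfl : i = n := by omega
    simpa [hn] using hM

theorem subnormalIn.induction_on {motive : Subgroup (Perm V) → Prop} (hK : subnormalIn K H)
    (refl : motive K)
    (step : ∀ {M H}, subnormalIn K M → normalIn M H → motive M → motive H) : motive H := by
  obtain ⟨n, c, h0, hn, hc⟩ := hK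
  induction n generalizing H with
  | zero => exact hn.symm.trans h0 ▸ refl
  | succ n ih =>
    have hKc : subnormalIn K (c n) := ⟨n, c, h0, rfl, fun i hi => hc i (by omega)⟩
    exact hn ▸ step hKc (hc n n.lt_succ_self) (ih rfl fun i hi => hc i (by omega))

theorem subnormalIn.le (hK : subnormalIn K H) : K ≤ H :=
  hK.induction_on le_rfl fun _ hM hKM => hKM.trans hM.1

theorem subnormalIn.of_le_of_normalIn (hK : subnormalIn K H) (hKN : K ≤ N) (hN : normalIn N H) :
    subnormalIn K N := by
  refine hK.induction_on (motive := fun H => ∀ N, K ≤ N → normalIn N H → subnormalIn K N)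
    (fun N hKN hN => le_antisymm hN.1 hKN ▸ subnormalIn_refl K) ?_ N hKN hN
  intro M H hKM hM ih N hKN hN
  exact (ih _ (le_inf hKN hKM.le) (hN.inf_of_le hM.1)).trans_normalIn
    (inf_comm N M ▸ hM.inf_of_le hN.1)

theorem layer_mono (h : normalIn M H) : layer M ≤ layer H :=
  sSup_le fun _ hK => le_sSup ⟨hK.1.trans_normalIn h, hK.2⟩

theorem exists_component_not_le_of_layer_ne (hMH : normalIn M H) (hne : layer M ≠ layer H) :
    ∃ K, subnormalIn K H ∧ IsQuasisimple K ∧ ¬ K ≤ M := by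
  by_contra! hcon
  refine hne (le_antisymm (layer_mono hMH) (sSup_le fun K hK => le_sSup ?_))
  exact ⟨hK.1.of_le_of_normalIn (hcon K hK.1 hK.2) hMH, hK.2⟩

theorem IsQuasisimple.commutator_self_eq (hK : IsQuasisimple K) : ⁅K, K⁆ = K := by
  rw [← K.map_subtype_commutator, hK.1, ← MonoidHom.range_eq_map, K.range_subtype]

theorem IsQuasisimple.commutator_eq_bot_of_normalIn (hK : IsQuasisimple K) (hN : normalIn N K)
    (hKN : ¬ K ≤ N) : ⁅K, N⁆ = ⊥ := by
  have : (N.subgroupOf K).Normal := ⟨fun n hn g => hN.2 g g.2 n hn⟩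
  have := hK.2
  rcases (N.subgroupOf K).le_center_or_eq_top_of_isSimpleGroup_quotient_center hK.1 with
    hcen | htop
  · rw [commutator_comm, commutator_eq_bot_iff_le_centralizer]
    intro n hn
    rw [mem_centralizer_iff]
    intro k hk
    simpa using mem_center_iff.mp (hcen (show ⟨n, hN.1 hn⟩ ∈ N.subgroupOf K from hn)) ⟨k, hk⟩
  · exact absurd (subgroupOf_eq_top.mp htop) hKN

/-- Wielandt's lemma. -/
theorem subnormalIn.commutator_eq_bot_of_isQuasisimple (hK : subnormalIn K H)
    (hq : IsQuasisimple K) (hN : normalIn N H) (hKN : ¬ K ≤ N) : ⁅K, N⁆ = ⊥ := by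
  refine hK.induction_on (motive := fun H => ∀ N, normalIn N H → ¬ K ≤ N → ⁅K, N⁆ = ⊥)
    (fun N hN hKN => hq.commutator_eq_bot_of_normalIn hN hKN) ?_ N hN hKN
  intro M H hKM hM ih N hN hKN
  have hKN' : ⁅K, N⁆ ≤ N ⊓ M :=
    le_inf (commutator_comm N K ▸ hN.commutator_le le_rfl (hKM.le.trans hM.1))
      (hM.commutator_le hKM.le hN.1)
  have hKNM : ⁅K, N ⊓ M⁆ = ⊥ := ih _ (hN.inf_of_le hM.1) fun h => hKN (h.trans inf_le_left)
  have h1 : ⁅⁅K, N⁆, K⁆ = ⊥ := by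
    rw [commutator_comm, eq_bot_iff, ← hKNM]
    exact commutator_mono le_rfl hKN'
  have h2 : ⁅⁅N, K⁆, K⁆ = ⊥ := commutator_comm K N ▸ h1
  simpa [hq.commutator_self_eq] using commutator_commutator_eq_bot_of_rotate h1 h2

end Subnormal

section Graph

variable {V : Type*} {Δ : SimpleGraph V} {G : Subgroup (Perm V)} {g : Perm V} {u v w : V}

theorem SimpleGraph.Connected.dist_le_one_iff (hconn : Δ.Connected) :
    Δ.dist u v ≤ 1 ↔ u = v ∨ Δ.Adj u v := by
  rw [Nat.le_one_iff_eq_zero_or_eq_one, hconn.dist_eq_zero_iff, SimpleGraph.dist_eq_one_iff_adj]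

theorem SimpleGraph.Connected.dist_le_succ_iff (hconn : Δ.Connected) {n : ℕ} :
    Δ.dist u w ≤ n + 1 ↔ ∃ v, Δ.dist u v ≤ n ∧ Δ.dist v w ≤ 1 := by
  refine ⟨fun h => ?_, fun ⟨v, huv, hvw⟩ => (hconn.dist_triangle (v := v)).trans (by omega)⟩
  obtain ⟨p, hp⟩ := hconn.exists_walk_length_eq_dist w u
  cases p with
  | nil => exact ⟨u, by simp, by simp⟩
  | @cons _ a _ hwa q =>
    refine ⟨a, ?_, (hconn.dist_le_one_iff).mpr (Or.inr hwa.symm)⟩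
    have := SimpleGraph.dist_le q.reverse
    rw [SimpleGraph.dist_comm] at h
    simp only [SimpleGraph.Walk.length_reverse, SimpleGraph.Walk.length_cons] at this hp
    omega

theorem SimpleGraph.Connected.dist_apply_le_of_isAut (hconn : Δ.Connected) (hG : isAut Δ G)
    (hg : g ∈ G) (v w : V) : Δ.dist (g v) (g w) ≤ Δ.dist v w := by
  obtain ⟨p, hp⟩ := hconn.exists_walk_length_eq_dist v w
  let f : Δ →g Δ := ⟨g, (hG g hg _ _).mpr⟩
  calc Δ.dist (g v) (g w) ≤ (p.map f).length := SimpleGraph.dist_le _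
    _ = Δ.dist v w := by rw [SimpleGraph.Walk.length_map, hp]

theorem SimpleGraph.Preconnected.exists_eq_or_adj_of_adj_adj_closed (hconn : Δ.Preconnected)
    {P : V → Prop} {x : V} (hx : P x) (hP : ∀ u a b, P u → Δ.Adj u a → Δ.Adj a b → P b) (v : V) :
    ∃ u, P u ∧ (u = v ∨ Δ.Adj u v) := by
  obtain ⟨p⟩ := hconn v x
  induction p with
  | nil => exact ⟨_, hx, Or.inl rfl⟩
  | cons hva _ ih =>
    obtain ⟨u, hu, rfl | hua⟩ := ih hx
    · exact ⟨u, hu, Or.inr hva.symm⟩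
    · exact ⟨_, hP u _ _ hu hua hva.symm, Or.inl rfl⟩

end Graph

section Stabilisers

variable {V : Type*} {Δ : SimpleGraph V} {G : Subgroup (Perm V)} {g c : Perm V} {u v w : V}
  {r s : ℕ}

theorem mem_vstab_iff : g ∈ vstab G v ↔ g ∈ G ∧ g v = v := by
  rw [vstab, mem_inf, MulAction.mem_stabilizer_iff, Perm.smul_def]

theorem mem_ball_iff : g ∈ ball Δ G v r ↔ g ∈ G ∧ ∀ t, Δ.dist v t ≤ r → g t = t := by
  simp [ball, mem_inf, mem_iInf, MulAction.mem_stabilizer_iff, Perm.smul_def]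

theorem ball_anti (h : r ≤ s) : ball Δ G v s ≤ ball Δ G v r := fun _ hg =>
  mem_ball_iff.mpr ⟨(mem_ball_iff.mp hg).1, fun t ht => (mem_ball_iff.mp hg).2 t (ht.trans h)⟩

theorem mem_ball_one_iff_forall_adj (hconn : Δ.Connected) :
    g ∈ ball Δ G v 1 ↔ g ∈ vstab G v ∧ ∀ t, Δ.Adj v t → g t = t := by
  simp only [mem_ball_iff, hconn.dist_le_one_iff, mem_vstab_iff, or_imp, forall_and,
    forall_eq', and_assoc]

theorem mem_ball_two_iff (hconn : Δ.Connected) :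
    g ∈ ball Δ G v 2 ↔ ∀ w, Δ.dist v w ≤ 1 → g ∈ ball Δ G w 1 := by
  simp only [mem_ball_iff, hconn.dist_le_succ_iff (n := 1)]
  exact ⟨fun ⟨hgG, hg⟩ w hw => ⟨hgG, fun t ht => hg t ⟨w, hw, ht⟩⟩,
    fun h => ⟨(h v (by simp)).1, fun t ⟨w, hw, ht⟩ => (h w hw).2 t ht⟩⟩

theorem ball_two_le_ball_one_of_adj (hconn : Δ.Connected) (h : Δ.Adj u w) :
    ball Δ G w 2 ≤ ball Δ G u 1 := fun _ hg =>
  (mem_ball_two_iff hconn).mp hg u (hconn.dist_le_one_iff.mpr (Or.inr h.symm))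

theorem conj_mem_ball (hconn : Δ.Connected) (hG : isAut Δ G) (hg : g ∈ G) {a : Perm V}
    (ha : a ∈ ball Δ G v r) : g * a * g⁻¹ ∈ ball Δ G (g v) r := by
  obtain ⟨haG, hfix⟩ := mem_ball_iff.mp ha
  refine mem_ball_iff.mpr ⟨G.mul_mem (G.mul_mem hg haG) (G.inv_mem hg), fun t ht => ?_⟩
  have : Δ.dist v (g⁻¹ t) ≤ r := by
    simpa using (hconn.dist_apply_le_of_isAut hG (G.inv_mem hg) (g v) t).trans ht
  rw [Perm.mul_apply, Perm.mul_apply, hfix _ this, Perm.coe_inv, apply_symm_apply]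

theorem conj_mem_locCent (hconn : Δ.Connected) (hG : isAut Δ G) (hg : g ∈ G)
    (hc : c ∈ locCent Δ G v) : g * c * g⁻¹ ∈ locCent Δ G (g v) := by
  obtain ⟨hcv, hcen⟩ := mem_inf.mp hc
  obtain ⟨hcG, hcfix⟩ := mem_vstab_iff.mp hcv
  refine mem_inf.mpr ⟨mem_vstab_iff.mpr ⟨G.mul_mem (G.mul_mem hg hcG) (G.inv_mem hg), ?_⟩,
    mem_centralizer_iff.mpr fun m hm => ?_⟩
  · simp [hcfix]
  have hm' : g⁻¹ * m * g⁻¹⁻¹ ∈ ball Δ G v 1 := by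
    simpa using conj_mem_ball hconn hG (G.inv_mem hg) hm
  simpa [mul_assoc] using ((Commute.conj_iff g).mpr (mem_centralizer_iff.mp hcen _ hm')).eq

theorem transOn_locCent_apply (hconn : Δ.Connected) (hG : isAut Δ G) (hg : g ∈ G)
    (ht : transOn Δ (locCent Δ G v) v) : transOn Δ (locCent Δ G (g v)) (g v) := by
  intro a ha b hb
  have hmem : ∀ {t}, t ∈ Δ.neighborSet (g v) → g⁻¹ t ∈ Δ.neighborSet v := fun {t} h => by
    simpa using (hG _ (G.inv_mem hg) (g v) t).mpr h
  obtain ⟨c, hc, hcab⟩ := ht _ (hmem ha) _ (hmem hb)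
  refine ⟨g * c * g⁻¹, conj_mem_locCent hconn hG hg hc, ?_⟩
  rw [Perm.mul_apply, Perm.mul_apply, hcab, Perm.coe_inv, apply_symm_apply]

theorem normalIn_ball_one_vstab_inf (hconn : Δ.Connected) (hG : isAut Δ G) (hvw : Δ.Adj v w) :
    normalIn (ball Δ G v 1) (vstab G v ⊓ vstab G w) := by
  refine ⟨fun g hg => ?_, fun h hh k hk => ?_⟩
  · obtain ⟨hgG, hfix⟩ := mem_ball_iff.mp hg
    exact mem_inf.mpr ⟨mem_vstab_iff.mpr ⟨hgG, hfix v (by simp)⟩,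
      mem_vstab_iff.mpr ⟨hgG, hfix w (hconn.dist_le_one_iff.mpr (Or.inr hvw))⟩⟩
  · obtain ⟨hhG, hhv⟩ := mem_vstab_iff.mp (mem_inf.mp hh).1
    simpa [hhv] using conj_mem_ball hconn hG hhG hk

end Stabilisers

section LocalCentraliser

variable {V : Type*} {Δ : SimpleGraph V} {G : Subgroup (Perm V)} {g c : Perm V} {u w x y : V}
  {r : ℕ}

theorem mem_ball_apply_of_mem_locCent (hconn : Δ.Connected) (hG : isAut Δ G)
    (hc : c ∈ locCent Δ G u) (hgu : g ∈ ball Δ G u 1) (hg : g ∈ ball Δ G w r) :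
    g ∈ ball Δ G (c w) r := by
  have hcg : c * g * c⁻¹ = g := by
    rw [← mem_centralizer_iff.mp (mem_inf.mp hc).2 g hgu, mul_inv_cancel_right]
  simpa [hcg] using conj_mem_ball hconn hG (mem_vstab_iff.mp (mem_inf.mp hc).1).1 hg

theorem ball_two_eq_of_transOn_locCent (hconn : Δ.Connected) (hG : isAut Δ G)
    (htr : transOn Δ (locCent Δ G u) u) {w w' : V} (hw : Δ.Adj u w) (hw' : Δ.Adj u w') :
    ball Δ G w 2 = ball Δ G w' 2 := by
  have key : ∀ {a b}, Δ.Adj u a → Δ.Adj u b → ball Δ G a 2 ≤ ball Δ G b 2 := by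
    intro a b ha hb g hg
    obtain ⟨c, hc, rfl⟩ := htr a ha b hb
    exact mem_ball_apply_of_mem_locCent hconn hG hc (ball_two_le_ball_one_of_adj hconn ha hg) hg
  exact le_antisymm (key hw hw') (key hw' hw)

theorem ball_one_inf_ball_one_eq_ball_two (hconn : Δ.Connected) (hG : isAut Δ G)
    (hxy : Δ.Adj x y) (htr : transOn Δ (locCent Δ G x) x) :
    ball Δ G x 1 ⊓ ball Δ G y 1 = ball Δ G x 2 := by
  refine le_antisymm (fun g hg => (mem_ball_two_iff hconn).mpr fun w hw => ?_)
    (le_inf (ball_anti one_le_two) (ball_two_le_ball_one_of_adj hconn hxy.symm))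
  obtain ⟨hgx, hgy⟩ := mem_inf.mp hg
  rcases hconn.dist_le_one_iff.mp hw with rfl | hxw
  · exact hgx
  · obtain ⟨c, hc, rfl⟩ := htr y hxy w hxw
    exact mem_ball_apply_of_mem_locCent hconn hG hc hgx hgy

theorem transOn_locCent_of_adj_adj (hconn : Δ.Connected) (hG : isAut Δ G) (hstar : StarHyp Δ G)
    {a b : V} (htr : transOn Δ (locCent Δ G u) u) (hua : Δ.Adj u a) (hab : Δ.Adj a b) :
    transOn Δ (locCent Δ G b) b := by
  obtain ⟨g, hg, rfl⟩ := (hstar a).1 u hua.symm b hab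
  exact transOn_locCent_apply hconn hG (mem_vstab_iff.mp hg).1 htr

theorem transOn_locCent_of_layer_ne (hconn : Δ.Connected) (hG : isAut Δ G) (hstar : StarHyp Δ G)
    (hxy : Δ.Adj x y) (hE : layer (ball Δ G x 1) ≠ layer (vstab G x ⊓ vstab G y)) :
    transOn Δ (locCent Δ G x) x := by
  have hA := normalIn_ball_one_vstab_inf hconn hG hxy
  obtain ⟨K, hK, hKq, hKA⟩ := exists_component_not_le_of_layer_ne hA hE
  have hKL : K ≤ locCent Δ G x :=
    le_inf (hK.le.trans inf_le_left) (commutator_eq_bot_iff_le_centralizer.mp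
      (hK.commutator_eq_bot_of_isQuasisimple hKq hA hKA))
  obtain ⟨k, hkK, hkA⟩ := SetLike.not_le_iff_exists.mp hKA
  have hkx : k ∈ vstab G x := (mem_inf.mp (hK.le hkK)).1
  obtain ⟨t, hxt, hkt⟩ : ∃ t, Δ.Adj x t ∧ k t ≠ t := by
    by_contra! h
    exact hkA ((mem_ball_one_iff_forall_adj hconn).mpr ⟨hkx, h⟩)
  refine (hstar x).2.1.resolve_right fun hsemi => hkt ?_
  exact hsemi k (hKL hkK) ⟨y, hxy, (mem_vstab_iff.mp (mem_inf.mp (hK.le hkK)).2).2⟩ t hxt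

theorem ball_two_eq_bot_of_transOn_locCent (hconn : Δ.Connected) (hG : isAut Δ G)
    (hstar : StarHyp Δ G) (hxy : Δ.Adj x y) (htr : transOn Δ (locCent Δ G x) x) :
    ball Δ G y 2 = ⊥ := by
  refine (eq_bot_iff_forall _).mpr fun g hg => Equiv.ext fun v => ?_
  let P : V → Prop := fun u =>
    transOn Δ (locCent Δ G u) u ∧ g ∈ ball Δ G u 1 ∧ ∀ w, Δ.Adj u w → g ∈ ball Δ G w 2
  have hPx : P x := ⟨htr, ball_two_le_ball_one_of_adj hconn hxy hg,
    fun w hw => ball_two_eq_of_transOn_locCent hconn hG htr hxy hw ▸ hg⟩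
  have hstep : ∀ u a b, P u → Δ.Adj u a → Δ.Adj a b → P b := by
    intro u a b ⟨htru, _, hgu⟩ hua hab
    have htrb := transOn_locCent_of_adj_adj hconn hG hstar htru hua hab
    exact ⟨htrb, ball_two_le_ball_one_of_adj hconn hab.symm (hgu a hua),
      fun w hbw => ball_two_eq_of_transOn_locCent hconn hG htrb hab.symm hbw ▸ hgu a hua⟩
  obtain ⟨u, ⟨-, hgu, -⟩, huv⟩ := hconn.preconnected.exists_eq_or_adj_of_adj_adj_closed hPx hstep v
  exact (mem_ball_iff.mp hgu).2 v (hconn.dist_le_one_iff.mpr huv)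

end LocalCentraliser

theorem stmt2_general {V : Type*} (Δ : SimpleGraph V) (G : Subgroup (Equiv.Perm V))
    (hconn : Δ.Connected) (hG : isAut Δ G) (hstar : StarHyp Δ G)
    {x y : V} (hxy : Δ.Adj x y)
    (hE : layer (ball Δ G x 1) ≠ layer (vstab G x ⊓ vstab G y)) :
    ball Δ G x 1 ⊓ ball Δ G y 1 = ball Δ G x 2 ∧ ball Δ G y 2 = ⊥ := by
  have htr := transOn_locCent_of_layer_ne hconn hG hstar hxy hE
  exact ⟨ball_one_inf_ball_one_eq_ball_two hconn hG hxy htr,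
    ball_two_eq_bot_of_transOn_locCent hconn hG hstar hxy htr⟩

theorem stmt2 {V : Type*} [Fintype V] (Δ : SimpleGraph V) (G : Subgroup (Equiv.Perm V))
    (hconn : Δ.Connected) (hG : isAut Δ G) (hstar : StarHyp Δ G)
    {x y : V} (hxy : Δ.Adj x y)
    (hE : layer (ball Δ G x 1) ≠ layer (vstab G x ⊓ vstab G y)) :
    ball Δ G x 1 ⊓ ball Δ G y 1 = ball Δ G x 2 ∧ ball Δ G y 2 = ⊥ :=
  stmt2_general Δ G hconn hG hstar hxy hE
end

section
/- Let Δ be a finite connected graph, G ≤ Aut(Δ), p a prime, (x,y) an arc, S_{x,z} = O_p(G_{x,z}) for z ∈ Δ(x), and E_x = ⟨S_{x,z} : z ∈ Δ(x)⟩. Then [G_x^{[1]}, E_x] ≤ O_p(G_x^{[1]}). -/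
open Equiv Subgroup

/-! Since `G_x^{[1]}` is normal in `G_x`, so is its characteristic subgroup `O_p(G_x^{[1]})`.
For `z ∈ Δ(x)` and a normal `p`-subgroup `S` of `G_{x,z}`, both `G_x^{[1]}` and `S` lie in `G_x`
and normalise each other, so `[G_x^{[1]}, S] ≤ G_x^{[1]} ∩ S`, a normal `p`-subgroup of
`G_x^{[1]}`; hence `[G_x^{[1]}, S] ≤ O_p(G_x^{[1]})`. The elements of `G_x` centralising
`G_x^{[1]}` modulo `O_p(G_x^{[1]})` form a subgroup, which therefore contains `E_x`. -/

namespace SimpleGraph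

variable {V W : Type*} {Δ : SimpleGraph V} {Δ' : SimpleGraph W}

lemma Hom.edist_le (f : Δ →g Δ') (u v : V) : Δ'.edist (f u) (f v) ≤ Δ.edist u v :=
  le_iInf fun w => (w.length_map f) ▸ SimpleGraph.edist_le (w.map f)

lemma Iso.dist_eq (f : Δ ≃g Δ') (u v : V) : Δ'.dist (f u) (f v) = Δ.dist u v := by
  refine congrArg ENat.toNat (le_antisymm (f.toHom.edist_le u v) ?_)
  simpa using f.symm.toHom.edist_le (f u) (f v)

end SimpleGraph

section Group

variable {Γ : Type*} [Group Γ]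

open scoped commutatorElement

lemma commutatorElement_mem_inf {A K : Subgroup Γ} {a k : Γ} (ha : a ∈ A) (hk : k ∈ K)
    (hkA : k ∈ normalizer A) (haK : a ∈ normalizer K) : ⁅a, k⁆ ∈ A ⊓ K := by
  refine mem_inf.mpr ⟨?_, mul_mem ((mem_normalizer_iff.mp haK k).mp hk) (inv_mem hk)⟩
  simpa only [commutatorElement_def, mul_assoc] using
    mul_mem ha ((mem_normalizer_iff.mp hkA a⁻¹).mp (inv_mem ha))

def centralizerMod (A N : Subgroup Γ) : Subgroup Γ where
  carrier := {g | g ∈ normalizer N ∧ ∀ a ∈ A, ⁅a, g⁆ ∈ N}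
  one_mem' := ⟨one_mem _, fun a _ => by simp⟩
  mul_mem' := by
    rintro g h ⟨hg, hgA⟩ ⟨hh, hhA⟩
    refine ⟨mul_mem hg hh, fun a ha => ?_⟩
    have : ⁅a, g * h⁆ = ⁅a, g⁆ * (g * ⁅a, h⁆ * g⁻¹) := by group
    rw [this]
    exact mul_mem (hgA a ha) ((mem_normalizer_iff.mp hg _).mp (hhA a ha))
  inv_mem' := by
    rintro g ⟨hg, hgA⟩
    refine ⟨inv_mem hg, fun a ha => ?_⟩
    have : ⁅a, g⁻¹⁆ = g⁻¹ * ⁅a, g⁆⁻¹ * g⁻¹⁻¹ := by group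
    rw [this]
    exact (mem_normalizer_iff.mp (inv_mem hg) _).mp (inv_mem (hgA a ha))

lemma commutator_le_of_le_centralizerMod {A K N : Subgroup Γ} (h : K ≤ centralizerMod A N) :
    ⁅A, K⁆ ≤ N :=
  commutator_le.mpr fun _ ha _ hk => (h hk).2 _ ha

end Group

section Permutations

variable {V : Type*} {Δ : SimpleGraph V} {G : Subgroup (Perm V)}

lemma mem_vstab {x : V} {g : Perm V} : g ∈ vstab G x ↔ g ∈ G ∧ g x = x := by
  simp [vstab, MulAction.mem_stabilizer_iff, Perm.smul_def]

lemma mem_ball {x : V} {i : ℕ} {g : Perm V} :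
    g ∈ ball Δ G x i ↔ g ∈ G ∧ ∀ z, Δ.dist x z ≤ i → g z = z := by
  simp [ball, MulAction.mem_stabilizer_iff, Perm.smul_def, mem_iInf]

lemma ball_le_vstab {x z : V} {i : ℕ} (hz : Δ.dist x z ≤ i) : ball Δ G x i ≤ vstab G z :=
  fun _ hg => mem_vstab.mpr ⟨(mem_ball.mp hg).1, (mem_ball.mp hg).2 z hz⟩

lemma isAut.dist_apply (hG : isAut Δ G) {g : Perm V} (hg : g ∈ G) (u v : V) :
    Δ.dist (g u) (g v) = Δ.dist u v :=
  SimpleGraph.Iso.dist_eq ⟨g, hG g hg _ _⟩ u v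

lemma vstab_le_normalizer_ball (hG : isAut Δ G) (x : V) (i : ℕ) :
    vstab G x ≤ normalizer (ball Δ G x i) := by
  refine le_normalizer_iff.mpr fun g hg h hh => ?_
  obtain ⟨hgG, hgx⟩ := mem_vstab.mp hg
  refine mem_ball.mpr ⟨mul_mem (mul_mem hgG (mem_ball.mp hh).1) (inv_mem hgG), fun w hw => ?_⟩
  have hw' : Δ.dist x (g⁻¹ w) ≤ i := by
    rwa [← hG.dist_apply hgG, ← Perm.mul_apply, mul_inv_cancel, Perm.one_apply, hgx]
  rw [Perm.mul_apply, Perm.mul_apply, (mem_ball.mp hh).2 _ hw', ← Perm.mul_apply, mul_inv_cancel,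
    Perm.one_apply]

variable {p : ℕ} {H K : Subgroup (Perm V)}

lemma normalIn_iff_le_normalizer : normalIn K H ↔ K ≤ H ∧ H ≤ normalizer K := by
  rw [normalIn, le_normalizer_iff]

lemma le_Op (hK : normalIn K H) (hKp : IsPGroup p K) : K ≤ Op p H :=
  le_sSup ⟨hK, hKp⟩

lemma normalizer_le_normalizer_Op : normalizer H ≤ normalizer (Op p H : Set (Perm V)) := by
  refine le_normalizer_iff.mpr fun g hg n hn => ?_
  have hHg : H.map (MulAut.conj g) = H := mem_normalizer_iff_map_conj_eq.mp hg
  suffices (Op p H).map (MulAut.conj g) ≤ Op p H from this ⟨n, hn, rfl⟩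
  rw [Op, (gc_map_comap _).l_sSup]
  refine iSup₂_le fun K ⟨hK, hKp⟩ => le_Op ?_ (hKp.map _)
  obtain ⟨hKH, hHK⟩ := normalIn_iff_le_normalizer.mp hK
  refine normalIn_iff_le_normalizer.mpr ⟨hHg ▸ map_mono hKH, ?_⟩
  exact hHg ▸ (map_mono hHK).trans (le_normalizer_map _)

lemma commutator_le_Op {A : Subgroup (Perm V)} (hKp : IsPGroup p K) (hAK : A ≤ normalizer K)
    (hKA : K ≤ normalizer A) : ⁅A, K⁆ ≤ Op p A := by
  have hnormal : normalIn (A ⊓ K) A := normalIn_iff_le_normalizer.mpr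
    ⟨inf_le_left, (le_inf le_normalizer hAK).trans inf_normalizer_le_normalizer_inf⟩
  exact commutator_le.mpr fun a ha k hk => le_Op hnormal (hKp.to_le inf_le_right)
    (commutatorElement_mem_inf ha hk (hKA hk) (hAK ha))

end Permutations

theorem stmt4_general {V : Type*} (Δ : SimpleGraph V) (G : Subgroup (Equiv.Perm V))
    (hG : isAut Δ G)
    (p : ℕ) {x : V} :
    ⁅ball Δ G x 1, Ep Δ G p x⁆ ≤ Op p (ball Δ G x 1) := by
  have hGx : vstab G x ≤ normalizer (Op p (ball Δ G x 1) : Set (Perm V)) :=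
    (vstab_le_normalizer_ball hG x 1).trans normalizer_le_normalizer_Op
  refine commutator_le_of_le_centralizerMod
    (iSup₂_le fun z hz => sSup_le fun K ⟨hK, hKp⟩ => ?_)
  have hKx : K ≤ vstab G x := hK.1.trans inf_le_left
  have hball : ball Δ G x 1 ≤ vstab G x ⊓ vstab G z :=
    le_inf (ball_le_vstab (by simp)) (ball_le_vstab (SimpleGraph.dist_eq_one_iff_adj.mpr hz).le)
  have hcomm := commutator_le_Op hKp (hball.trans (normalIn_iff_le_normalizer.mp hK).2)
    (hKx.trans (vstab_le_normalizer_ball hG x 1))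
  exact fun g hg => ⟨hGx (hKx hg), fun a ha => hcomm (commutator_mem_commutator ha hg)⟩

theorem stmt4 {V : Type*} [Fintype V] (Δ : SimpleGraph V) (G : Subgroup (Equiv.Perm V))
    (hconn : Δ.Connected) (hG : isAut Δ G)
    (htrans : ∀ x : V, transOn Δ (vstab G x) x)
    (p : ℕ) (hp : p.Prime) {x y : V} (hxy : Δ.Adj x y) :
    ⁅ball Δ G x 1, Ep Δ G p x⁆ ≤ Op p (ball Δ G x 1) :=
  stmt4_general Δ G hG p
end

section
/- With H = (R^{sm} ⋊ S) × R_{r−1} and the involution a as defined in the construction (acting on Ω of size mrs + r − 1), one has |H : H ∩ H^a| = rs, the core of H ∩ H^a in H equals L = (∏_{j=1}^{m−1} ∏_{i=0}^{s−1} R(Y_{i,j})) × R(X_m), and the action of H/L on the right cosets of (H ∩ H^a)/L is permutation equivalent to the natural imprimitive action of R ≀ S of degree rs. -/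
open Equiv Subgroup

/-- The imprimitive wreath product `R ≀ S` of degree `rs`, as a set of permutations of
`Fin r × Fin s` (blocks `Fin r × {i}`). -/
def wreathSet {r s : ℕ} (R : Subgroup (Equiv.Perm (Fin r))) (S : Subgroup (Equiv.Perm (Fin s))) :
    Set (Equiv.Perm (Fin r × Fin s)) :=
  {σ | ∃ τ ∈ S, ∃ f : Fin s → Equiv.Perm (Fin r), (∀ i, f i ∈ R) ∧
    ∀ p : Fin r × Fin s, σ p = (f p.2 p.1, τ p.2)}

/-- The subgroup `H = (R^{sm} ⋊ S) × R_{r-1}` of `Sym(Ω)`, `Ω = {0,…,mrs+r-2}`,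
described as the set of permutations preserving the block structure
`Y_{i,j} = {z + ir + jrs : z < r}` (`i < s`, `j < m`) and `X_m = {z + mrs : z < r-1}`,
acting on each block via `R` (resp. `R_{r-1}`) and permuting the blocks of each `X_j`
via `S`. -/
def Hset (r s m : ℕ) (hr : 1 < r) (R : Subgroup (Equiv.Perm (Fin r)))
    (S : Subgroup (Equiv.Perm (Fin s))) : Set (Equiv.Perm (Fin (m * r * s + r - 1))) :=
  {h | ∃ τ ∈ S,
    (∀ (i : ℕ) (hi : i < s) (j : ℕ), j < m →
      ∃ ρ ∈ R, ∀ (z : ℕ) (hz : z < r) (ω : Fin (m * r * s + r - 1)),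
        (ω : ℕ) = z + i * r + j * (r * s) →
        ((h ω : Fin (m * r * s + r - 1)) : ℕ) =
          ((ρ ⟨z, hz⟩ : Fin r) : ℕ) + ((τ ⟨i, hi⟩ : Fin s) : ℕ) * r + j * (r * s)) ∧
    (∃ ρ ∈ R, ρ ⟨r - 1, by omega⟩ = (⟨r - 1, by omega⟩ : Fin r) ∧
      ∀ (z : ℕ) (hz : z < r - 1) (ω : Fin (m * r * s + r - 1)),
        (ω : ℕ) = z + m * (r * s) →
        ((h ω : Fin (m * r * s + r - 1)) : ℕ) =
          ((ρ ⟨z, by omega⟩ : Fin r) : ℕ) + m * (r * s))}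

/-- The subgroup `L = (∏_{j=1}^{m-1} ∏_{i=0}^{s-1} R(Y_{i,j})) × R(X_m)`: permutations
fixing `X_0 = {0,…,rs-1}` pointwise, acting on each `Y_{i,j}` with `j ≥ 1` via `R`, and
on `X_m` via `R_{r-1}`. -/
def Lset (r s m : ℕ) (hr : 1 < r) (R : Subgroup (Equiv.Perm (Fin r))) :
    Set (Equiv.Perm (Fin (m * r * s + r - 1))) :=
  {h | (∀ ω : Fin (m * r * s + r - 1), (ω : ℕ) < r * s → h ω = ω) ∧
    (∀ (i : ℕ) (hi : i < s) (j : ℕ), 1 ≤ j → j < m →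
      ∃ ρ ∈ R, ∀ (z : ℕ) (hz : z < r) (ω : Fin (m * r * s + r - 1)),
        (ω : ℕ) = z + i * r + j * (r * s) →
        ((h ω : Fin (m * r * s + r - 1)) : ℕ) = ((ρ ⟨z, hz⟩ : Fin r) : ℕ) + i * r + j * (r * s)) ∧
    (∃ ρ ∈ R, ρ ⟨r - 1, by omega⟩ = (⟨r - 1, by omega⟩ : Fin r) ∧
      ∀ (z : ℕ) (hz : z < r - 1) (ω : Fin (m * r * s + r - 1)),
        (ω : ℕ) = z + m * (r * s) →
        ((h ω : Fin (m * r * s + r - 1)) : ℕ) = ((ρ ⟨z, by omega⟩ : Fin r) : ℕ) + m * (r * s))}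

/-- The defining rules for the involution `a` of Section 4 of the paper. -/
def isA (r s m : ℕ) (a : Equiv.Perm (Fin (m * r * s + r - 1))) : Prop :=
  a * a = 1 ∧
  (∀ z : ℕ, z < r - 1 → ∀ ω : Fin (m * r * s + r - 1), (ω : ℕ) = z →
    ((a ω : Fin (m * r * s + r - 1)) : ℕ) = z + m * (r * s)) ∧
  (∀ ω : Fin (m * r * s + r - 1), (ω : ℕ) = r - 1 → a ω = ω) ∧
  (∀ j : ℕ, Odd j → 1 ≤ j → j ≤ m - 2 → ∀ z : ℕ, z < r →
    ∀ ω : Fin (m * r * s + r - 1), (ω : ℕ) = z + j * (r * s) →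
      ((a ω : Fin (m * r * s + r - 1)) : ℕ) = z + (j + 1) * (r * s)) ∧
  (∀ j : ℕ, Even j → 2 ≤ j → j ≤ m - 1 → ∀ z : ℕ, z < r →
    ∀ ω : Fin (m * r * s + r - 1), (ω : ℕ) = z + j * (r * s) →
      ((a ω : Fin (m * r * s + r - 1)) : ℕ) = z + (j - 1) * (r * s)) ∧
  (∀ j : ℕ, Even j → j ≤ m - 3 → ∀ i : ℕ, 1 ≤ i → i ≤ s - 1 → ∀ z : ℕ, z < r →
    ∀ ω : Fin (m * r * s + r - 1), (ω : ℕ) = z + i * r + j * (r * s) →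
      ((a ω : Fin (m * r * s + r - 1)) : ℕ) = z + i * r + (j + 1) * (r * s)) ∧
  (∀ j : ℕ, Odd j → 1 ≤ j → j ≤ m - 2 → ∀ i : ℕ, 1 ≤ i → i ≤ s - 1 → ∀ z : ℕ, z < r →
    ∀ ω : Fin (m * r * s + r - 1), (ω : ℕ) = z + i * r + j * (r * s) →
      ((a ω : Fin (m * r * s + r - 1)) : ℕ) = z + i * r + (j - 1) * (r * s)) ∧
  (∀ i : ℕ, 1 ≤ i → i ≤ s - 1 → ∀ z : ℕ, z < r →
    ∀ ω : Fin (m * r * s + r - 1), (ω : ℕ) = z + i * r + (m - 1) * (r * s) → a ω = ω) ∧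
  (∀ z : ℕ, z < r - 1 → ∀ ω : Fin (m * r * s + r - 1), (ω : ℕ) = z + m * (r * s) →
    ((a ω : Fin (m * r * s + r - 1)) : ℕ) = z)

/-!
The involution `a` fixes the point `r - 1` and moves every other point of
`X_0 = {0, …, rs - 1}` out of `X_0`, while `H` preserves `X_0`; so `h ∈ H` can only lie in
`H^a` if it fixes `r - 1`. Conversely, for such an `h`, conjugation by `a` exchanges the roles of
`Y_{0,0} ∖ {r - 1}` and `X_m` and otherwise only relabels the levels `j` of the blocks `Y_{i,j}`
(in a way depending on `i` only through whether `i = 0`, which the top permutation of `h`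
preserves), so `a h a ∈ H`. Hence `H ∩ H^a` is the stabiliser of `r - 1` in `H`. Its orbit is
`X_0`, on which `H` induces exactly `R ≀ S`, so the orbit-stabiliser theorem gives the index
`rs` and identifies the coset action with the action on `X_0`. The kernel of that action, which
is the core, is the pointwise stabiliser of `X_0` in `H`, and that is `L`.
-/

namespace MulAction

variable {G α β : Type*} [Group G] [MulAction G α]

theorem normalCore_stabilizer (x : α) :
    (stabilizer G x).normalCore = fixingSubgroup G (orbit G x) := by
  ext g
  change (∀ b : G, b * g * b⁻¹ ∈ stabilizer G x) ↔ _
  simp only [mem_stabilizer_iff, mem_fixingSubgroup_iff, mem_orbit_iff, forall_exists_index,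
    forall_apply_eq_imp_iff, mul_smul]
  refine ⟨fun h a => ?_, fun h b => by rw [h, smul_inv_smul]⟩
  simpa [inv_smul_eq_iff] using h a⁻¹

theorem exists_equivariant_quotient_stabilizer_equiv (x : α) (ι : β ≃ orbit G x) :
    ∃ (φ : G →* Perm β) (e : G ⧸ stabilizer G x ≃ β),
      φ.ker = fixingSubgroup G (orbit G x) ∧ (∀ g b, (ι (φ g b) : α) = g • (ι b : α)) ∧
      ∀ g q, e (g • q) = φ g (e q) := by
  set e := (orbitEquivQuotientStabilizer G x).symm.trans ι.symm
  refine ⟨(e.permCongrHom : Perm (G ⧸ stabilizer G x) →* Perm β).comp (toPermHom G _), e,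
    ?_, fun g b => ?_, fun g q => by simp [e, Equiv.permCongr_apply]⟩
  · rw [MonoidHom.ker_mulEquiv_comp, ← normalCore_eq_ker, normalCore_stabilizer]
  · obtain ⟨k, hk⟩ := QuotientGroup.mk_surjective (orbitEquivQuotientStabilizer G x (ι b))
    have hb : (ι b : α) = k • x := by
      rw [← orbitEquivQuotientStabilizer_symm_apply, hk, Equiv.symm_apply_apply]
    simp [e, Equiv.permCongr_apply, ← hk, mul_smul, hb]

end MulAction

section Blocks

variable {r s m : ℕ}

def blockEquiv (hr : 0 < r) :
    (Fin m × Fin s × Fin r) ⊕ Fin (r - 1) ≃ Fin (m * r * s + r - 1) :=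
  ((Equiv.sumCongr ((Equiv.prodCongr (Equiv.refl _) finProdFinEquiv).trans finProdFinEquiv)
    (Equiv.refl _)).trans finSumFinEquiv).trans
    (finCongr (by rw [show m * (s * r) = m * r * s by ring]; omega))

@[simp]
lemma val_blockEquiv_inl (hr : 0 < r) (j : Fin m) (i : Fin s) (z : Fin r) :
    (blockEquiv hr (.inl (j, i, z)) : ℕ) = z + i * r + j * (r * s) := by
  simp [blockEquiv, finProdFinEquiv]; ring

@[simp]
lemma val_blockEquiv_inr (hr : 0 < r) (z : Fin (r - 1)) :
    (blockEquiv (m := m) (s := s) hr (.inr z) : ℕ) = z + m * (r * s) := by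
  simp [blockEquiv]; ring

def wreathLift (hr : 0 < r) (τ : Perm (Fin s)) (f : Fin s → Perm (Fin r)) :
    Perm (Fin (m * r * s + r - 1)) :=
  (blockEquiv hr).permCongr (sumCongr (prodCongr (Equiv.refl _) (prodShear τ f)) (Equiv.refl _))

@[simp]
lemma wreathLift_inl (hr : 0 < r) (τ : Perm (Fin s)) (f : Fin s → Perm (Fin r))
    (j : Fin m) (i : Fin s) (z : Fin r) :
    wreathLift hr τ f (blockEquiv hr (.inl (j, i, z))) = blockEquiv hr (.inl (j, τ i, f i z)) := by
  simp [wreathLift, permCongr_apply]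

@[simp]
lemma wreathLift_inr (hr : 0 < r) (τ : Perm (Fin s)) (f : Fin s → Perm (Fin r))
    (z : Fin (r - 1)) :
    wreathLift (m := m) hr τ f (blockEquiv hr (.inr z)) = blockEquiv hr (.inr z) := by
  simp [wreathLift, permCongr_apply]

end Blocks

section Hset

variable {r s m : ℕ} (hr : 1 < r) {R : Subgroup (Perm (Fin r))} {S : Subgroup (Perm (Fin s))}

lemma val_apply_lt_pred_of_fixed {ρ : Perm (Fin r)}
    (hρ : ρ ⟨r - 1, by omega⟩ = ⟨r - 1, by omega⟩) {z : ℕ} (hz : z < r - 1) :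
    (ρ ⟨z, by omega⟩ : ℕ) < r - 1 := by
  refine lt_of_le_of_ne (Nat.le_sub_one_of_lt (ρ _).isLt) fun h => ?_
  have := ρ.injective ((Fin.ext h).trans hρ.symm)
  simp only [Fin.mk.injEq] at this
  omega

lemma one_mem_Hset : 1 ∈ Hset r s m hr R S :=
  ⟨1, S.one_mem, fun _ _ _ _ => ⟨1, R.one_mem, fun _ _ _ hω => by simp [hω]⟩,
    1, R.one_mem, rfl, fun _ _ _ hω => by simp [hω]⟩

lemma mul_mem_Hset {h₁ h₂ : Perm (Fin (m * r * s + r - 1))} (h₁H : h₁ ∈ Hset r s m hr R S)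
    (h₂H : h₂ ∈ Hset r s m hr R S) : h₁ * h₂ ∈ Hset r s m hr R S := by
  obtain ⟨τ₁, hτ₁, hB₁, ρ₁, hρ₁, hfix₁, hX₁⟩ := h₁H
  obtain ⟨τ₂, hτ₂, hB₂, ρ₂, hρ₂, hfix₂, hX₂⟩ := h₂H
  refine ⟨τ₁ * τ₂, S.mul_mem hτ₁ hτ₂, fun i hi j hj => ?_, ρ₁ * ρ₂, R.mul_mem hρ₁ hρ₂,
    by simp [hfix₁, hfix₂], fun z hz ω hω => ?_⟩
  · obtain ⟨σ₂, hσ₂, hP₂⟩ := hB₂ i hi j hj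
    obtain ⟨σ₁, hσ₁, hP₁⟩ := hB₁ _ (τ₂ ⟨i, hi⟩).isLt j hj
    exact ⟨σ₁ * σ₂, R.mul_mem hσ₁ hσ₂, fun z hz ω hω =>
      by simpa using hP₁ _ (σ₂ ⟨z, hz⟩).isLt _ (hP₂ z hz ω hω)⟩
  · simpa using hX₁ _ (val_apply_lt_pred_of_fixed hr hfix₂ hz) _ (hX₂ z hz ω hω)

lemma coe_closure_Hset :
    (closure (Hset r s m hr R S) : Set (Perm (Fin (m * r * s + r - 1)))) = Hset r s m hr R S := by
  let M : Submonoid (Perm (Fin (m * r * s + r - 1))) :=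
    { carrier := Hset r s m hr R S, mul_mem' := mul_mem_Hset hr, one_mem' := one_mem_Hset hr }
  rw [← coe_toSubmonoid, closure_toSubmonoid_of_finite]
  exact congrArg SetLike.coe (Submonoid.closure_eq M)

lemma mem_closure_Hset {h : Perm (Fin (m * r * s + r - 1))} :
    h ∈ closure (Hset r s m hr R S) ↔ h ∈ Hset r s m hr R S := by
  rw [← SetLike.mem_coe, coe_closure_Hset]

lemma wreathLift_mem_Hset {τ : Perm (Fin s)} {f : Fin s → Perm (Fin r)} (hτ : τ ∈ S)
    (hf : ∀ i, f i ∈ R) : wreathLift (Nat.zero_lt_of_lt hr) τ f ∈ Hset r s m hr R S := by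
  refine ⟨τ, hτ, fun i hi j hj => ⟨f ⟨i, hi⟩, hf _, fun z hz ω hω => ?_⟩, 1, R.one_mem, rfl,
    fun z hz ω hω => ?_⟩
  · obtain rfl : ω = blockEquiv (Nat.zero_lt_of_lt hr) (.inl (⟨j, hj⟩, ⟨i, hi⟩, ⟨z, hz⟩)) :=
      Fin.ext (by simp [hω])
    simp
  · obtain rfl : ω = blockEquiv (Nat.zero_lt_of_lt hr) (.inr ⟨z, hz⟩) := Fin.ext (by simp [hω])
    simp

def embX₀ (hm : 0 < m) (p : Fin r × Fin s) : Fin (m * r * s + r - 1) :=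
  blockEquiv (Nat.zero_lt_of_lt hr) (.inl (⟨0, hm⟩, p.2, p.1))

@[simp]
lemma val_embX₀ (hm : 0 < m) (p : Fin r × Fin s) : (embX₀ hr hm p : ℕ) = p.1 + p.2 * r := by
  simp [embX₀]

lemma embX₀_injective (hm : 0 < m) : Function.Injective (embX₀ (s := s) hr hm) := by
  intro p q h
  simpa [embX₀, Prod.ext_iff, and_comm] using h

lemma val_embX₀_lt (hm : 0 < m) (p : Fin r × Fin s) : (embX₀ hr hm p : ℕ) < r * s := by
  have := Nat.mul_le_mul_right r (Nat.succ_le_of_lt p.2.isLt)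
  rw [val_embX₀]
  nlinarith [p.1.isLt]

lemma range_embX₀ (hm : 0 < m) :
    Set.range (embX₀ (s := s) hr hm) = {ω : Fin (m * r * s + r - 1) | (ω : ℕ) < r * s} := by
  ext ω
  refine ⟨?_, fun hω => ⟨(⟨ω % r, Nat.mod_lt _ (by omega)⟩, ⟨ω / r, Nat.div_lt_of_lt_mul hω⟩),
    Fin.ext (by simp [Nat.mod_add_div'])⟩⟩
  rintro ⟨p, rfl⟩
  exact val_embX₀_lt hr hm p

lemma exists_wreath_of_mem_Hset (hm : 0 < m) {h : Perm (Fin (m * r * s + r - 1))}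
    (hh : h ∈ Hset r s m hr R S) :
    ∃ τ ∈ S, ∃ f : Fin s → Perm (Fin r), (∀ i, f i ∈ R) ∧
      ∀ p, h (embX₀ hr hm p) = embX₀ hr hm (f p.2 p.1, τ p.2) := by
  obtain ⟨τ, hτ, hB, -⟩ := hh
  choose f hf hfh using fun i : Fin s => hB i i.isLt 0 hm
  exact ⟨τ, hτ, f, hf, fun p => Fin.ext (by simpa using hfh p.2 p.1 p.1.isLt _ (by simp))⟩

lemma mem_wreathSet_iff_exists_mem_Hset (hm : 0 < m) (σ : Perm (Fin r × Fin s)) :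
    σ ∈ wreathSet R S ↔
      ∃ h ∈ Hset r s m hr R S, ∀ p, h (embX₀ hr hm p) = embX₀ hr hm (σ p) := by
  constructor
  · rintro ⟨τ, hτ, f, hf, hσ⟩
    exact ⟨_, wreathLift_mem_Hset hr hτ hf, fun p => by simp [embX₀, hσ p]⟩
  · rintro ⟨h, hh, hσ⟩
    obtain ⟨τ, hτ, f, hf, hτf⟩ := exists_wreath_of_mem_Hset hr hm hh
    exact ⟨τ, hτ, f, hf, fun p => embX₀_injective hr hm ((hσ p).symm.trans (hτf p))⟩

lemma val_apply_lt_of_mem_Hset (hm : 0 < m) {h : Perm (Fin (m * r * s + r - 1))}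
    (hh : h ∈ Hset r s m hr R S) {ω : Fin (m * r * s + r - 1)} (hω : (ω : ℕ) < r * s) :
    (h ω : ℕ) < r * s := by
  obtain ⟨p, rfl⟩ : ω ∈ Set.range (embX₀ hr hm) := by rwa [range_embX₀]
  obtain ⟨τ, -, f, -, hτf⟩ := exists_wreath_of_mem_Hset hr hm hh
  rw [hτf]
  exact val_embX₀_lt hr hm _

end Hset

/-- The level to which the involution `a` moves the block `Y_{i,j}`, `(i, j) ≠ (0, 0)`. -/
def levelPartner (m i j : ℕ) : ℕ :=
  if i = 0 then (if j % 2 = 1 then j + 1 else j - 1)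
  else if j = m - 1 then j else if j % 2 = 0 then j + 1 else j - 1

section levelPartner

variable {m i j : ℕ}

lemma levelPartner_lt (hm : m % 2 = 1) (hj : j < m) : levelPartner m i j < m := by
  unfold levelPartner; split_ifs <;> omega

lemma levelPartner_ne_zero (hj : j ≠ 0) : levelPartner m 0 j ≠ 0 := by
  unfold levelPartner; split_ifs <;> omega

lemma levelPartner_levelPartner (hm : m % 2 = 1) {i' : ℕ} (hi : i' = 0 ↔ i = 0) (hj : j < m)
    (hij : i ≠ 0 ∨ j ≠ 0) : levelPartner m i' (levelPartner m i j) = j := by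
  unfold levelPartner; split_ifs <;> omega

end levelPartner

namespace isA

variable {r s m : ℕ} {a : Perm (Fin (m * r * s + r - 1))}

lemma inv_eq (ha : isA r s m a) : a⁻¹ = a := inv_eq_of_mul_eq_one_right ha.1

lemma val_apply_of_lt_pred (ha : isA r s m a) {z : ℕ} (hz : z < r - 1)
    {ω : Fin (m * r * s + r - 1)} (hω : (ω : ℕ) = z) : (a ω : ℕ) = z + m * (r * s) :=
  ha.2.1 z hz ω hω

lemma apply_of_val_eq_pred (ha : isA r s m a) {ω : Fin (m * r * s + r - 1)}
    (hω : (ω : ℕ) = r - 1) : a ω = ω :=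
  ha.2.2.1 ω hω

lemma val_apply_of_eq_add_mul (ha : isA r s m a) {z : ℕ} (hz : z < r - 1)
    {ω : Fin (m * r * s + r - 1)} (hω : (ω : ℕ) = z + m * (r * s)) : (a ω : ℕ) = z :=
  ha.2.2.2.2.2.2.2.2 z hz ω hω

lemma val_apply_block (ha : isA r s m a) (hm : m % 2 = 1) {i j z : ℕ} (hi : i < s) (hj : j < m)
    (hij : i ≠ 0 ∨ j ≠ 0) (hz : z < r) {ω : Fin (m * r * s + r - 1)}
    (hω : (ω : ℕ) = z + i * r + j * (r * s)) :
    (a ω : ℕ) = z + i * r + levelPartner m i j * (r * s) := by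
  unfold levelPartner
  split_ifs with hi0 hjo hjm hje
  · subst hi0
    simpa using ha.2.2.2.1 j (Nat.odd_iff.2 hjo) (by omega) (by omega) z hz ω (by simpa using hω)
  · subst hi0
    simpa using ha.2.2.2.2.1 j (Nat.even_iff.2 (by omega)) (by omega) (by omega) z hz ω
      (by simpa using hω)
  · subst hjm
    rw [ha.2.2.2.2.2.2.2.1 i (by omega) (by omega) z hz ω hω, hω]
  · exact ha.2.2.2.2.2.1 j (Nat.even_iff.2 hje) (by omega) i (by omega) (by omega) z hz ω hω
  · exact ha.2.2.2.2.2.2.1 j (Nat.odd_iff.2 (by omega)) (by omega) (by omega) i (by omega)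
      (by omega) z hz ω hω

lemma val_apply_lt_iff (ha : isA r s m a) (hr : 0 < r) (hm : 3 ≤ m) (hmo : m % 2 = 1)
    {ω : Fin (m * r * s + r - 1)} (hω : (ω : ℕ) < r * s) :
    (a ω : ℕ) < r * s ↔ (ω : ℕ) = r - 1 := by
  have hrs : r * s ≤ m * (r * s) := Nat.le_mul_of_pos_left _ (by omega)
  have hz : (ω : ℕ) % r < r := Nat.mod_lt _ hr
  have hi : (ω : ℕ) / r < s := Nat.div_lt_of_lt_mul hω
  have hdec : (ω : ℕ) = ω % r + ω / r * r + 0 * (r * s) := by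
    rw [zero_mul, add_zero, Nat.mod_add_div']
  rcases Nat.eq_zero_or_pos ((ω : ℕ) / r) with hi0 | hi0
  · rw [hi0] at hdec
    by_cases hzr : (ω : ℕ) < r - 1
    · rw [ha.val_apply_of_lt_pred hzr rfl]; omega
    · rw [ha.apply_of_val_eq_pred (by omega)]; omega
  · have hir : r ≤ (ω : ℕ) / r * r := Nat.le_mul_of_pos_left r hi0
    have hpartner : levelPartner m ((ω : ℕ) / r) 0 = 1 := by
      unfold levelPartner; split_ifs <;> omega
    rw [ha.val_apply_block hmo hi (by omega) (Or.inl hi0.ne') hz hdec, hpartner]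
    omega

end isA

section Stabilizer

variable {r s m : ℕ} (hr : 1 < r) {R : Subgroup (Perm (Fin r))} {S : Subgroup (Perm (Fin s))}
  {a : Perm (Fin (m * r * s + r - 1))}

def basePoint (hs : 0 < s) (hm : 0 < m) : Fin (m * r * s + r - 1) :=
  embX₀ hr hm (⟨r - 1, by omega⟩, ⟨0, hs⟩)

@[simp]
lemma val_basePoint (hs : 0 < s) (hm : 0 < m) : (basePoint hr hs hm : ℕ) = r - 1 := by
  simp [basePoint]

lemma fixed_of_apply_basePoint (hs : 0 < s) (hm : 0 < m) {h : Perm (Fin (m * r * s + r - 1))}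
    {ρ : Perm (Fin r)} {τ₀ : Fin s}
    (hP : ∀ (z : ℕ) (hz : z < r) (ω : Fin (m * r * s + r - 1)), (ω : ℕ) = z + 0 * r + 0 * (r * s) →
      (h ω : ℕ) = ρ ⟨z, hz⟩ + τ₀ * r + 0 * (r * s))
    (hfix : h (basePoint hr hs hm) = basePoint hr hs hm) :
    ρ ⟨r - 1, by omega⟩ = ⟨r - 1, by omega⟩ ∧ (τ₀ : ℕ) = 0 := by
  have hv := hP (r - 1) (by omega) (basePoint hr hs hm) (by simp)
  rw [hfix, val_basePoint] at hv
  have hτ₀ : (τ₀ : ℕ) = 0 := by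
    by_contra hne
    have := Nat.le_mul_of_pos_left r (Nat.pos_of_ne_zero hne)
    omega
  rw [hτ₀] at hv
  exact ⟨Fin.ext (show _ = r - 1 by omega), hτ₀⟩

lemma isA.val_conj_apply_of_lt (ha : isA r s m a) (hs : 0 < s) (hm : 0 < m)
    {h : Perm (Fin (m * r * s + r - 1))} (hfix : h (basePoint hr hs hm) = basePoint hr hs hm)
    {ρ : Perm (Fin r)} (hρ : ρ ⟨r - 1, by omega⟩ = ⟨r - 1, by omega⟩)
    (hX : ∀ (z : ℕ) (hz : z < r - 1) (ω : Fin (m * r * s + r - 1)), (ω : ℕ) = z + m * (r * s) →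
      (h ω : ℕ) = ρ ⟨z, by omega⟩ + m * (r * s))
    {z : ℕ} (hz : z < r) {ω : Fin (m * r * s + r - 1)} (hω : (ω : ℕ) = z) :
    (a (h (a ω)) : ℕ) = ρ ⟨z, hz⟩ := by
  rcases Nat.lt_or_ge z (r - 1) with hz' | hz'
  · exact ha.val_apply_of_eq_add_mul (val_apply_lt_pred_of_fixed hr hρ hz')
      (hX z hz' _ (ha.val_apply_of_lt_pred hz' hω))
  · obtain rfl : z = r - 1 := by omega
    obtain rfl : ω = basePoint hr hs hm := Fin.ext (by simp [hω])
    have hbase : a (basePoint hr hs hm) = basePoint hr hs hm :=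
      ha.apply_of_val_eq_pred (val_basePoint ..)
    rw [hbase, hfix, hbase, hρ, val_basePoint]

lemma isA.conj_mem_Hset (ha : isA r s m a) (hs : 0 < s) (hm : 3 ≤ m) (hmo : m % 2 = 1)
    {h : Perm (Fin (m * r * s + r - 1))} (hh : h ∈ Hset r s m hr R S)
    (hfix : h (basePoint hr hs (by omega)) = basePoint hr hs (by omega)) :
    a * h * a ∈ Hset r s m hr R S := by
  obtain ⟨τ, hτ, hB, ρm, hρm, hfixm, hXm⟩ := hh
  obtain ⟨ρ₀, hρ₀, hP₀⟩ := hB 0 hs 0 (by omega)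
  obtain ⟨hfix₀, hτ₀⟩ := fixed_of_apply_basePoint hr hs (by omega) hP₀ hfix
  have hτ_eq_zero : ∀ i (hi : i < s), (τ ⟨i, hi⟩ : ℕ) = 0 ↔ i = 0 := fun i hi => by
    rw [← hτ₀, Fin.val_inj, τ.injective.eq_iff, Fin.mk.injEq, hτ₀]
  refine ⟨τ, hτ, fun i hi j hj => ?_, ρ₀, hρ₀, hfix₀, fun z hz ω hω => ?_⟩
  · by_cases hij : i = 0 ∧ j = 0
    · obtain ⟨rfl, rfl⟩ := hij
      refine ⟨ρm, hρm, fun z hz ω hω => ?_⟩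
      rw [hτ₀, Perm.mul_apply, Perm.mul_apply,
        ha.val_conj_apply_of_lt hr hs _ hfix hfixm hXm hz (by simpa using hω)]
      simp
    -- `a` moves `Y_{i,j}` to level `levelPartner m i j`, `h` keeps that level, and `a` moves
    -- the image back to level `j` because `τ i = 0 ↔ i = 0`.
    have hij' : i ≠ 0 ∨ j ≠ 0 := by tauto
    obtain ⟨ρ, hρ, hP⟩ := hB i hi (levelPartner m i j) (levelPartner_lt hmo hj)
    refine ⟨ρ, hρ, fun z hz ω hω => ?_⟩
    have hne : (τ ⟨i, hi⟩ : ℕ) ≠ 0 ∨ levelPartner m i j ≠ 0 := by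
      by_cases hi0 : i = 0
      · subst hi0; exact Or.inr (levelPartner_ne_zero (by tauto))
      · exact Or.inl (by rwa [Ne, hτ_eq_zero])
    rw [Perm.mul_apply, Perm.mul_apply, ha.val_apply_block hmo (τ _).isLt
      (levelPartner_lt hmo hj) hne (ρ _).isLt
      (hP z hz _ (ha.val_apply_block hmo hi hj hij' hz hω)),
      levelPartner_levelPartner hmo (hτ_eq_zero i hi) hj hij']
  · have hv := hP₀ z (by omega) (a ω) (by simp [ha.val_apply_of_eq_add_mul hz hω])
    rw [hτ₀] at hv
    exact ha.val_apply_of_lt_pred (val_apply_lt_pred_of_fixed hr hfix₀ hz) (by simpa using hv)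

lemma isA.conj_mem_Hset_iff (ha : isA r s m a) (hs : 0 < s) (hm : 3 ≤ m) (hmo : m % 2 = 1)
    {h : Perm (Fin (m * r * s + r - 1))} (hh : h ∈ Hset r s m hr R S) :
    a * h * a ∈ Hset r s m hr R S ↔
      h (basePoint hr hs (by omega)) = basePoint hr hs (by omega) := by
  refine ⟨fun hconj => ?_, ha.conj_mem_Hset hr hs hm hmo hh⟩
  have hbase : a (basePoint hr hs (by omega)) = basePoint hr hs (by omega) :=
    ha.apply_of_val_eq_pred (val_basePoint ..)
  have hlt := val_embX₀_lt hr (by omega : 0 < m) (⟨r - 1, by omega⟩, ⟨0, hs⟩)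
  have h₁ := val_apply_lt_of_mem_Hset hr (by omega) hh hlt
  have h₂ := val_apply_lt_of_mem_Hset hr (by omega) hconj hlt
  rw [Perm.mul_apply, Perm.mul_apply, ← basePoint, hbase] at h₂
  exact Fin.ext (((ha.val_apply_lt_iff (by omega) hm hmo h₁).1 h₂).trans (val_basePoint ..).symm)

lemma subgroupOf_inf_map_conj_eq_stabilizer (ha : isA r s m a) (hs : 0 < s) (hm : 3 ≤ m)
    (hmo : m % 2 = 1) :
    (closure (Hset r s m hr R S) ⊓
        map (MulAut.conj a⁻¹).toMonoidHom (closure (Hset r s m hr R S))).subgroupOf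
        (closure (Hset r s m hr R S)) =
      MulAction.stabilizer (closure (Hset r s m hr R S)) (basePoint (m := m) hr hs (by omega)) := by
  ext ⟨h, hh⟩
  rw [inf_subgroupOf_left, mem_subgroupOf, mem_map_equiv, MulAut.conj_symm_apply, inv_inv,
    ha.inv_eq, MulAction.mem_stabilizer_iff, Subgroup.mk_smul, Perm.smul_def, mem_closure_Hset,
    ha.conj_mem_Hset_iff hr hs hm hmo ((mem_closure_Hset hr).1 hh)]

end Stabilizer

section Orbit

variable {r s m : ℕ} (hr : 1 < r) {R : Subgroup (Perm (Fin r))} (S : Subgroup (Perm (Fin s)))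

lemma Lset_eq (hm : 0 < m) :
    Lset r s m hr R = Hset r s m hr R S ∩
      {h | ∀ ω : Fin (m * r * s + r - 1), (ω : ℕ) < r * s → h ω = ω} := by
  ext h
  constructor
  · rintro ⟨hfix, hB, hX⟩
    refine ⟨⟨1, S.one_mem, fun i hi j hj => ?_, hX⟩, hfix⟩
    rcases Nat.eq_zero_or_pos j with rfl | hj₀
    · refine ⟨1, R.one_mem, fun z hz ω hω => ?_⟩
      obtain rfl : ω = embX₀ hr hm (⟨z, hz⟩, ⟨i, hi⟩) := Fin.ext (by simpa using hω)
      rw [hfix _ (val_embX₀_lt hr hm _)]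
      simp
    · obtain ⟨ρ, hρ, hP⟩ := hB i hi j hj₀ hj
      exact ⟨ρ, hρ, by simpa using hP⟩
  · rintro ⟨⟨τ, hτ, hB, hX⟩, hfix⟩
    refine ⟨hfix, fun i hi j _ hj => ?_, hX⟩
    have hτi : τ ⟨i, hi⟩ = ⟨i, hi⟩ := by
      obtain ⟨ρ, -, hP⟩ := hB i hi 0 hm
      have hv := hP 0 (by omega) (embX₀ hr hm (⟨0, by omega⟩, ⟨i, hi⟩)) (by simp)
      rw [hfix _ (val_embX₀_lt hr hm _)] at hv
      have hemb : embX₀ hr hm (ρ ⟨0, by omega⟩, τ ⟨i, hi⟩) =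
          embX₀ hr hm (⟨0, by omega⟩, ⟨i, hi⟩) :=
        Fin.ext (by simp at hv ⊢; omega)
      exact congrArg Prod.snd (embX₀_injective hr hm hemb)
    obtain ⟨ρ, hρ, hP⟩ := hB i hi j hj
    exact ⟨ρ, hρ, fun z hz ω hω => by rw [hP z hz ω hω, hτi]⟩

lemma closure_Lset (hm : 0 < m) :
    closure (Lset r s m hr R) = closure (Hset r s m hr R S) ⊓
      fixingSubgroup (Perm (Fin (m * r * s + r - 1)))
        {ω : Fin (m * r * s + r - 1) | (ω : ℕ) < r * s} := by
  conv_rhs => rw [← closure_eq (closure (Hset r s m hr R S) ⊓ fixingSubgroup _ _)]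
  congr 1
  ext h
  simp [Lset_eq hr S hm, mem_closure_Hset, mem_fixingSubgroup_iff, Perm.smul_def]

variable {S}

lemma orbit_basePoint (hs : 0 < s) (hm : 0 < m) (hR : ∀ u v : Fin r, ∃ g ∈ R, g u = v)
    (hS : ∀ u v : Fin s, ∃ g ∈ S, g u = v) :
    MulAction.orbit (closure (Hset r s m hr R S)) (basePoint hr hs hm) =
      Set.range (embX₀ hr hm) := by
  ext ω
  constructor
  · rintro ⟨⟨h, hh⟩, rfl⟩
    obtain ⟨τ, -, f, -, hτf⟩ := exists_wreath_of_mem_Hset hr hm ((mem_closure_Hset hr).1 hh)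
    exact ⟨_, (hτf _).symm⟩
  · rintro ⟨⟨z, i⟩, rfl⟩
    obtain ⟨ρ, hρ, hρz⟩ := hR ⟨r - 1, by omega⟩ z
    obtain ⟨τ, hτ, hτi⟩ := hS ⟨0, hs⟩ i
    exact ⟨⟨_, subset_closure (wreathLift_mem_Hset hr hτ fun _ => hρ)⟩,
      by simp [basePoint, embX₀, Perm.smul_def, hρz, hτi]⟩

lemma fixingSubgroup_orbit_basePoint (hs : 0 < s) (hm : 0 < m)
    (hR : ∀ u v : Fin r, ∃ g ∈ R, g u = v) (hS : ∀ u v : Fin s, ∃ g ∈ S, g u = v) :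
    fixingSubgroup (closure (Hset r s m hr R S))
        (MulAction.orbit (closure (Hset r s m hr R S)) (basePoint hr hs hm)) =
      (closure (Lset r s m hr R)).subgroupOf (closure (Hset r s m hr R S)) := by
  ext ⟨h, hh⟩
  rw [orbit_basePoint hr hs hm hR hS, range_embX₀, closure_Lset hr S hm, mem_subgroupOf, mem_inf,
    mem_fixingSubgroup_iff, mem_fixingSubgroup_iff]
  simp [hh, Perm.smul_def]

lemma coe_range_eq_wreathSet (hm : 0 < m)
    (φ : closure (Hset r s m hr R S) →* Perm (Fin r × Fin s))
    (hφ : ∀ g p, embX₀ hr hm (φ g p) = (g : Perm (Fin (m * r * s + r - 1))) (embX₀ hr hm p)) :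
    (φ.range : Set (Perm (Fin r × Fin s))) = wreathSet R S := by
  ext σ
  rw [mem_wreathSet_iff_exists_mem_Hset hr hm]
  constructor
  · rintro ⟨g, rfl⟩
    exact ⟨g, (mem_closure_Hset hr).1 g.2, fun p => (hφ g p).symm⟩
  · rintro ⟨h, hh, hσ⟩
    refine ⟨⟨h, subset_closure hh⟩, Equiv.ext fun p => embX₀_injective hr hm ?_⟩
    rw [hφ, ← hσ]

end Orbit

theorem stmt19 (r s m : ℕ) (hr : 1 < r) (hs : 1 < s) (hm : 3 ≤ m) (hmodd : Odd m)
    (R : Subgroup (Equiv.Perm (Fin r))) (S : Subgroup (Equiv.Perm (Fin s)))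
    (hR : ∀ u v : Fin r, ∃ g ∈ R, g u = v) (hS : ∀ u v : Fin s, ∃ g ∈ S, g u = v)
    (a : Equiv.Perm (Fin (m * r * s + r - 1))) (ha : isA r s m a)
    (HH Ha LL : Subgroup (Equiv.Perm (Fin (m * r * s + r - 1))))
    (hHH : HH = Subgroup.closure (Hset r s m hr R S))
    (hHa : Ha = Subgroup.map ((MulAut.conj a⁻¹ :
      Equiv.Perm (Fin (m * r * s + r - 1)) ≃* Equiv.Perm (Fin (m * r * s + r - 1)))).toMonoidHom HH)
    (hLL : LL = Subgroup.closure (Lset r s m hr R)) :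
    (HH ⊓ Ha).relIndex HH = r * s ∧
    Subgroup.map HH.subtype (((HH ⊓ Ha).subgroupOf HH).normalCore) = LL ∧
    ∃ (φ : HH →* Equiv.Perm (Fin r × Fin s))
      (e : (HH ⧸ (HH ⊓ Ha).subgroupOf HH) ≃ Fin r × Fin s),
      φ.ker = LL.subgroupOf HH ∧
      (φ.range : Set (Equiv.Perm (Fin r × Fin s))) = wreathSet R S ∧
      ∀ (h : HH) (q : HH ⧸ (HH ⊓ Ha).subgroupOf HH), e (h • q) = φ h (e q) := by
  have hs₀ : 0 < s := by omega
  have hm₀ : 0 < m := by omega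
  subst hHH hHa hLL
  rw [relIndex, subgroupOf_inf_map_conj_eq_stabilizer hr ha hs₀ hm (Nat.odd_iff.1 hmodd)]
  obtain ⟨φ, e, hker, hφ, he⟩ := MulAction.exists_equivariant_quotient_stabilizer_equiv _
    ((Equiv.ofInjective _ (embX₀_injective hr hm₀)).trans
      (Equiv.setCongr (orbit_basePoint hr hs₀ hm₀ hR hS).symm))
  have hcore := (MulAction.normalCore_stabilizer _).trans
    (fixingSubgroup_orbit_basePoint hr hs₀ hm₀ hR hS)
  refine ⟨by rw [index, Nat.card_congr e]; simp, ?_, φ, e, hker.trans ?_,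
    coe_range_eq_wreathSet hr hm₀ φ hφ, he⟩
  · rw [hcore, subgroupOf_map_subtype, inf_eq_left, closure_Lset hr S hm₀]
    exact inf_le_left
  · rw [← MulAction.normalCore_stabilizer, hcore]
end
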